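/- arXiv:1401.5897 — 3 statements merged into one kernel-verified Lean document; each statement's English description precedes it below -/
import Mathlib

section
/- Monotonicity of density evolution: for all iterations i ≥ 0 and all sections l ∈ {0,...,L-1}, u_l(i) ≤ u_l(i+1), where u_l and v_l evolve by the coupled density-evolution recursions. -/
/-!
The density-evolution update is monotone: `φ` and `ψ` are monotone and both
recursions only average their values, while the boundary values `v_opt` do not
change with the iteration. Hence `u(i) ≤ u(i+1)` propagates to `v(i) ≤ v(i+1)`
and from there to `u(i+1) ≤ u(i+2)`. The induction starts because `u(0) = u_min`
lies below every value of `φ`, hence below their average `u(1)`.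
-/

open Finset
open scoped BigOperators

lemma one_div_pow_mul_sum_eq_expect (W d : ℕ) (f : (Fin d → Fin W) → ℝ) :
    1 / (W : ℝ) ^ d * ∑ w, f w = 𝔼 w, f w := by
  rw [Fintype.expect_eq_sum_div_card, Fintype.card_fun, Fintype.card_fin, Fintype.card_fin,
    Nat.cast_pow, one_div_mul_eq_div]

namespace DensityEvolution

variable {L W d dt : ℕ} {φ : (Fin d → ℝ) → ℝ} {ψ : (Fin dt → ℝ) → ℝ} {u v : ℕ → ℤ → ℝ}

lemma u_zero_le_u_one (hW : 1 ≤ W) {umin : ℝ} (humin : ∀ x, umin ≤ φ x)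
    (hu0 : ∀ l : ℤ, u 0 l = umin)
    (hrecu : ∀ i : ℕ, ∀ l : ℤ, 0 ≤ l → l ≤ (L : ℤ) - 1 →
      u (i + 1) l = (1 / (W : ℝ) ^ d) *
        ∑ w : Fin d → Fin W, φ (fun j => v i (l + (w j : ℤ))))
    {l : ℤ} (hl0 : 0 ≤ l) (hl1 : l ≤ (L : ℤ) - 1) : u 0 l ≤ u 1 l := by
  have : Nonempty (Fin d → Fin W) := ⟨fun _ => ⟨0, hW⟩⟩
  rw [hu0, hrecu 0 l hl0 hl1, one_div_pow_mul_sum_eq_expect]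
  exact le_expect univ_nonempty fun w _ => humin _

lemma v_le_v_succ (hψ : Monotone ψ) {vopt : ℝ}
    (hrecv : ∀ i : ℕ, ∀ l : ℤ, (W : ℤ) - 1 ≤ l → l ≤ (L : ℤ) - 1 →
      v i l = (1 / (W : ℝ) ^ dt) *
        ∑ w : Fin dt → Fin W, ψ (fun j => u i (l - (w j : ℤ))))
    (hbdry : ∀ i : ℕ, ∀ l : ℤ, ¬((W : ℤ) - 1 ≤ l ∧ l ≤ (L : ℤ) - 1) → v i l = vopt)
    {i : ℕ} (hu : ∀ l : ℤ, 0 ≤ l → l ≤ (L : ℤ) - 1 → u i l ≤ u (i + 1) l) (l : ℤ) :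
    v i l ≤ v (i + 1) l := by
  by_cases hl : (W : ℤ) - 1 ≤ l ∧ l ≤ (L : ℤ) - 1
  · rw [hrecv i l hl.1 hl.2, hrecv (i + 1) l hl.1 hl.2, one_div_pow_mul_sum_eq_expect,
      one_div_pow_mul_sum_eq_expect]
    -- `W - 1 ≤ l` keeps every `l - w j` inside the window `0 ≤ · ≤ L - 1` where `hu` applies.
    refine expect_le_expect fun w _ => hψ fun j => hu _ ?_ ?_ <;> have := (w j).isLt <;> omega
  · rw [hbdry i l hl, hbdry (i + 1) l hl]

lemma u_succ_le_u_succ_succ (hφ : Monotone φ)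
    (hrecu : ∀ i : ℕ, ∀ l : ℤ, 0 ≤ l → l ≤ (L : ℤ) - 1 →
      u (i + 1) l = (1 / (W : ℝ) ^ d) *
        ∑ w : Fin d → Fin W, φ (fun j => v i (l + (w j : ℤ))))
    {i : ℕ} (hv : ∀ l, v i l ≤ v (i + 1) l) {l : ℤ} (hl0 : 0 ≤ l) (hl1 : l ≤ (L : ℤ) - 1) :
    u (i + 1) l ≤ u (i + 2) l := by
  rw [hrecu i l hl0 hl1, hrecu (i + 1) l hl0 hl1, one_div_pow_mul_sum_eq_expect,
    one_div_pow_mul_sum_eq_expect]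
  exact expect_le_expect fun w _ => hφ fun j => hv _

end DensityEvolution

theorem de_monotone_general
    (L W d dt : ℕ) (hW : 1 ≤ W)
    (φ : (Fin d → ℝ) → ℝ) (ψ : (Fin dt → ℝ) → ℝ)
    (hφ : Monotone φ) (hψ : Monotone ψ)
    (u v : ℕ → ℤ → ℝ) (umin vopt : ℝ)
    (humin : ∀ x, umin ≤ φ x)
    (hu0 : ∀ l : ℤ, u 0 l = umin)
    (hrecu : ∀ i : ℕ, ∀ l : ℤ, 0 ≤ l → l ≤ (L : ℤ) - 1 →
      u (i + 1) l = (1 / (W : ℝ) ^ d) *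
        ∑ w : Fin d → Fin W, φ (fun j => v i (l + (w j : ℤ))))
    (hrecv : ∀ i : ℕ, ∀ l : ℤ, (W : ℤ) - 1 ≤ l → l ≤ (L : ℤ) - 1 →
      v i l = (1 / (W : ℝ) ^ dt) *
        ∑ w : Fin dt → Fin W, ψ (fun j => u i (l - (w j : ℤ))))
    (hbdry : ∀ i : ℕ, ∀ l : ℤ, ¬((W : ℤ) - 1 ≤ l ∧ l ≤ (L : ℤ) - 1) → v i l = vopt) :
    ∀ i : ℕ, ∀ l : ℤ, 0 ≤ l → l ≤ (L : ℤ) - 1 → u i l ≤ u (i + 1) l := by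
  intro i
  induction i with
  | zero => exact fun l => DensityEvolution.u_zero_le_u_one hW humin hu0 hrecu
  | succ i ih =>
    have hv := DensityEvolution.v_le_v_succ hψ hrecv hbdry ih
    exact fun l => DensityEvolution.u_succ_le_u_succ_succ hφ hrecu hv

/-- Monotonicity of discrete density evolution: u_l(i) ≤ u_l(i+1) for all
iterations i and sections l ∈ {0,...,L-1}. -/
theorem de_monotone
    (L W d dt : ℕ) (hW : 1 ≤ W) (hL : W ≤ L)
    (φ : (Fin d → ℝ) → ℝ) (ψ : (Fin dt → ℝ) → ℝ)
    (hφ : Monotone φ) (hψ : Monotone ψ)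
    (u v : ℕ → ℤ → ℝ) (umin vopt : ℝ)
    (humin : ∀ x, umin ≤ φ x) (hvopt : ∀ x, ψ x ≤ vopt)
    (hu0 : ∀ l : ℤ, u 0 l = umin)
    (hrecu : ∀ i : ℕ, ∀ l : ℤ, 0 ≤ l → l ≤ (L : ℤ) - 1 →
      u (i + 1) l = (1 / (W : ℝ) ^ d) *
        ∑ w : Fin d → Fin W, φ (fun j => v i (l + (w j : ℤ))))
    (hrecv : ∀ i : ℕ, ∀ l : ℤ, (W : ℤ) - 1 ≤ l → l ≤ (L : ℤ) - 1 →
      v i l = (1 / (W : ℝ) ^ dt) *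
        ∑ w : Fin dt → Fin W, ψ (fun j => u i (l - (w j : ℤ))))
    (hbdry : ∀ i : ℕ, ∀ l : ℤ, ¬((W : ℤ) - 1 ≤ l ∧ l ≤ (L : ℤ) - 1) → v i l = vopt) :
    ∀ i : ℕ, ∀ l : ℤ, 0 ≤ l → l ≤ (L : ℤ) - 1 → u i l ≤ u (i + 1) l :=
  de_monotone_general L W d dt hW φ ψ hφ hψ u v umin vopt humin hu0 hrecu hrecv hbdry
end

section
/- Monotonicity of the continuum DE: for the integral systems u(x,i+1) = (2α)^{-d} ∫_{[−α,α]^d} φ(v(x+ω₁,i),...,v(x+ω_d,i)) dω and v(x,i) = (2α)^{-d̃} ∫_{[−α,α]^{d̃}} ψ(u(x−ω₁,i),...,u(x−ω_{d̃},i)) dω, with initialization u(x,0) = u_min ≤ inf φ and boundary v(x,i) = v_opt ≥ sup ψ for |x| > 1−α, one has u(x,i) ≤ u(x,i+1) and v(x,i) ≤ v(x,i+1) for all x ∈ [−1,1] and all i. -/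
/-!
Each update averages a nondecreasing function of the other sequence, so it preserves the
pointwise order, while on the boundary `v` is constantly `v_opt`. Since `u_min ≤ φ`, the first
step goes up, and induction propagates `u i ≤ u (i + 1)` and `v i ≤ v (i + 1)`. The averages are
Bochner integrals, so their monotonicity needs integrable integrands: `u i` is only prescribed
on `[-1, 1]`, but it agrees there with a measurable function, which makes every `v i` measurable.
-/

open MeasureTheory Set Function

noncomputable section

def cube (ι : Type*) (α : ℝ) : Set (ι → ℝ) := Icc (fun _ => -α) (fun _ => α)

section CubeMean

variable {ι X : Type*} [Fintype ι] [MeasurableSpace X]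

def cubeMean (α : ℝ) (F : (ι → ℝ) → ℝ) : ℝ :=
  ((2 * α) ^ Fintype.card ι)⁻¹ * ∫ ω in cube ι α, F ω

lemma measurableSet_cube (α : ℝ) : MeasurableSet (cube ι α) := measurableSet_Icc

lemma measureReal_cube {α : ℝ} (hα : 0 ≤ α) :
    volume.real (cube ι α) = (2 * α) ^ Fintype.card ι := by
  rw [measureReal_def, cube, Real.volume_Icc_pi_toReal fun _ => by linarith]
  simp [two_mul]

lemma integrableOn_cube_of_abs_le {F : (ι → ℝ) → ℝ} (hF : Measurable F) {M : ℝ}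
    (hM : ∀ ω, |F ω| ≤ M) (α : ℝ) : IntegrableOn F (cube ι α) :=
  Measure.integrableOn_of_bounded measure_Icc_lt_top.ne hF.aestronglyMeasurable
    (ae_of_all _ hM)

lemma cubeMean_congr {α : ℝ} {F G : (ι → ℝ) → ℝ} (h : EqOn F G (cube ι α)) :
    cubeMean α F = cubeMean α G := by
  rw [cubeMean, cubeMean, setIntegral_congr_fun (measurableSet_cube α) h]

lemma cubeMean_mono {α : ℝ} (hα : 0 ≤ α) {F G : (ι → ℝ) → ℝ}
    (hF : IntegrableOn F (cube ι α)) (hG : IntegrableOn G (cube ι α))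
    (hFG : ∀ ω ∈ cube ι α, F ω ≤ G ω) : cubeMean α F ≤ cubeMean α G :=
  mul_le_mul_of_nonneg_left (setIntegral_mono_on hF hG (measurableSet_cube α) hFG)
    (by positivity)

lemma cubeMean_const {α : ℝ} (hα : 0 < α) (c : ℝ) : cubeMean α (fun _ : ι → ℝ => c) = c := by
  rw [cubeMean, setIntegral_const, smul_eq_mul, measureReal_cube hα.le]
  field_simp

lemma le_cubeMean {α : ℝ} (hα : 0 < α) {F : (ι → ℝ) → ℝ} (hF : IntegrableOn F (cube ι α))
    {c : ℝ} (hc : ∀ ω ∈ cube ι α, c ≤ F ω) : c ≤ cubeMean α F :=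
  cubeMean_const (ι := ι) hα c ▸
    cubeMean_mono hα.le (integrableOn_const measure_Icc_lt_top.ne) hF hc

lemma Measurable.cubeMean {F : X → (ι → ℝ) → ℝ} (hF : Measurable (uncurry F)) (α : ℝ) :
    Measurable fun x => cubeMean α (F x) :=
  measurable_const.mul hF.stronglyMeasurable.integral_prod_right'.measurable

end CubeMean

lemma sub_mem_Icc_of_abs_le {α x y : ℝ} (hx : |x| ≤ 1 - α) (hy : y ∈ Icc (-α) α) :
    x - y ∈ Icc (-1 : ℝ) 1 := by
  rw [abs_le] at hx
  constructor <;> linarith [hy.1, hy.2]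

lemma eqOn_cube_comp_sub {κ : Type*} {α x : ℝ} (hx : |x| ≤ 1 - α) {f g : ℝ → ℝ}
    (hfg : EqOn f g (Icc (-1) 1)) (ψ : (κ → ℝ) → ℝ) :
    EqOn (fun ω => ψ fun j => f (x - ω j)) (fun ω => ψ fun j => g (x - ω j)) (cube κ α) :=
  fun _ hω => congrArg ψ <| funext fun j => hfg (sub_mem_Icc_of_abs_le hx ⟨hω.1 j, hω.2 j⟩)

variable {ι κ : Type*} [Fintype ι] [Fintype κ]

structure IsContinuumDE (α : ℝ) (φ : (ι → ℝ) → ℝ) (ψ : (κ → ℝ) → ℝ) (umin vopt : ℝ)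
    (u v : ℕ → ℝ → ℝ) : Prop where
  init : ∀ x ∈ Icc (-1 : ℝ) 1, u 0 x = umin
  u_succ : ∀ i, ∀ x ∈ Icc (-1 : ℝ) 1, u (i + 1) x = cubeMean α fun ω => φ fun j => v i (x + ω j)
  v_interior : ∀ i x, |x| ≤ 1 - α → v i x = cubeMean α fun ω => ψ fun j => u i (x - ω j)
  v_boundary : ∀ i x, 1 - α < |x| → v i x = vopt

namespace IsContinuumDE

variable {α umin vopt : ℝ} {φ : (ι → ℝ) → ℝ} {ψ : (κ → ℝ) → ℝ} {u v : ℕ → ℝ → ℝ}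

lemma measurable_v_of_eqOn (h : IsContinuumDE α φ ψ umin vopt u v) (hψ : Measurable ψ)
    {i : ℕ} {g : ℝ → ℝ} (hg : Measurable g) (hug : EqOn (u i) g (Icc (-1) 1)) :
    Measurable (v i) := by
  have hv : v i = fun x =>
      if |x| ≤ 1 - α then cubeMean α (fun ω => ψ fun j => g (x - ω j)) else vopt := by
    funext x
    split_ifs with hx
    · rw [h.v_interior i x hx]
      exact cubeMean_congr (eqOn_cube_comp_sub hx hug ψ)
    · exact h.v_boundary i x (not_le.1 hx)
  rw [hv]
  exact Measurable.ite (measurableSet_le (by fun_prop) measurable_const)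
    (Measurable.cubeMean (by fun_prop) α) measurable_const

lemma exists_measurable_eqOn_u (h : IsContinuumDE α φ ψ umin vopt u v) (hφ : Measurable φ)
    (hψ : Measurable ψ) : ∀ i, ∃ g : ℝ → ℝ, Measurable g ∧ EqOn (u i) g (Icc (-1) 1)
  | 0 => ⟨fun _ => umin, measurable_const, h.init⟩
  | i + 1 => by
    obtain ⟨g, hg, hug⟩ := h.exists_measurable_eqOn_u hφ hψ i
    have hv := h.measurable_v_of_eqOn hψ hg hug
    exact ⟨_, Measurable.cubeMean (by fun_prop) α, h.u_succ i⟩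

lemma measurable_v (h : IsContinuumDE α φ ψ umin vopt u v) (hφ : Measurable φ)
    (hψ : Measurable ψ) (i : ℕ) : Measurable (v i) :=
  have ⟨_, hg, hug⟩ := h.exists_measurable_eqOn_u hφ hψ i
  h.measurable_v_of_eqOn hψ hg hug

lemma integrableOn_u_integrand (h : IsContinuumDE α φ ψ umin vopt u v) (hφ : Measurable φ)
    (hψ : Measurable ψ) (hφb : ∃ M, ∀ y, |φ y| ≤ M) (i : ℕ) (x : ℝ) :
    IntegrableOn (fun ω => φ fun j => v i (x + ω j)) (cube ι α) := by
  obtain ⟨M, hM⟩ := hφb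
  have hv := h.measurable_v hφ hψ i
  exact integrableOn_cube_of_abs_le (by fun_prop) (fun _ => hM _) α

lemma integrableOn_v_integrand (h : IsContinuumDE α φ ψ umin vopt u v) (hφ : Measurable φ)
    (hψ : Measurable ψ) (hψb : ∃ M, ∀ y, |ψ y| ≤ M) (i : ℕ) {x : ℝ} (hx : |x| ≤ 1 - α) :
    IntegrableOn (fun ω => ψ fun j => u i (x - ω j)) (cube κ α) := by
  obtain ⟨M, hM⟩ := hψb
  obtain ⟨g, hg, hug⟩ := h.exists_measurable_eqOn_u hφ hψ i
  exact (integrableOn_cube_of_abs_le (by fun_prop) (fun _ => hM _) α).congr_fun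
    (eqOn_cube_comp_sub hx hug ψ).symm (measurableSet_cube α)

lemma u_zero_le_u_one (h : IsContinuumDE α φ ψ umin vopt u v) (hα : 0 < α)
    (hφ : Measurable φ) (hψ : Measurable ψ) (hφb : ∃ M, ∀ y, |φ y| ≤ M)
    (humin : ∀ y, umin ≤ φ y) : ∀ x ∈ Icc (-1 : ℝ) 1, u 0 x ≤ u 1 x := by
  intro x hx
  rw [h.init x hx, h.u_succ 0 x hx]
  exact le_cubeMean hα (h.integrableOn_u_integrand hφ hψ hφb 0 x) fun _ _ => humin _

lemma u_succ_le_u_succ_succ (h : IsContinuumDE α φ ψ umin vopt u v) (hα : 0 ≤ α)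
    (hφ : Measurable φ) (hψ : Measurable ψ) (hφb : ∃ M, ∀ y, |φ y| ≤ M) (hφm : Monotone φ)
    {i : ℕ} (hv : ∀ y, v i y ≤ v (i + 1) y) :
    ∀ x ∈ Icc (-1 : ℝ) 1, u (i + 1) x ≤ u (i + 2) x := by
  intro x hx
  rw [h.u_succ i x hx, h.u_succ (i + 1) x hx]
  exact cubeMean_mono hα (h.integrableOn_u_integrand hφ hψ hφb i x)
    (h.integrableOn_u_integrand hφ hψ hφb (i + 1) x) fun _ _ => hφm fun _ => hv _

lemma v_le_v_succ (h : IsContinuumDE α φ ψ umin vopt u v) (hα : 0 ≤ α)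
    (hφ : Measurable φ) (hψ : Measurable ψ) (hψb : ∃ M, ∀ y, |ψ y| ≤ M) (hψm : Monotone ψ)
    {i : ℕ} (hu : ∀ x ∈ Icc (-1 : ℝ) 1, u i x ≤ u (i + 1) x) (y : ℝ) :
    v i y ≤ v (i + 1) y := by
  rcases le_or_gt |y| (1 - α) with hy | hy
  · rw [h.v_interior i y hy, h.v_interior (i + 1) y hy]
    exact cubeMean_mono hα (h.integrableOn_v_integrand hφ hψ hψb i hy)
      (h.integrableOn_v_integrand hφ hψ hψb (i + 1) hy) fun ω hω =>
        hψm fun j => hu _ (sub_mem_Icc_of_abs_le hy ⟨hω.1 j, hω.2 j⟩)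
  · rw [h.v_boundary i y hy, h.v_boundary (i + 1) y hy]

theorem monotone (h : IsContinuumDE α φ ψ umin vopt u v) (hα : 0 < α)
    (hφ : Measurable φ) (hψ : Measurable ψ)
    (hφb : ∃ M, ∀ y, |φ y| ≤ M) (hψb : ∃ M, ∀ y, |ψ y| ≤ M)
    (hφm : Monotone φ) (hψm : Monotone ψ) (humin : ∀ y, umin ≤ φ y) (i : ℕ) :
    (∀ x ∈ Icc (-1 : ℝ) 1, u i x ≤ u (i + 1) x) ∧ ∀ y, v i y ≤ v (i + 1) y := by
  have hu : ∀ i, ∀ x ∈ Icc (-1 : ℝ) 1, u i x ≤ u (i + 1) x := by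
    intro i
    induction i with
    | zero => exact h.u_zero_le_u_one hα hφ hψ hφb humin
    | succ i ih =>
      exact h.u_succ_le_u_succ_succ hα.le hφ hψ hφb hφm (h.v_le_v_succ hα.le hφ hψ hψb hψm ih)
  exact ⟨hu i, h.v_le_v_succ hα.le hφ hψ hψb hψm (hu i)⟩

end IsContinuumDE

end

theorem continuum_de_monotone_general
    (d dt : ℕ) (α : ℝ) (hα0 : 0 < α)
    (φ : (Fin d → ℝ) → ℝ) (ψ : (Fin dt → ℝ) → ℝ)
    (hφc : Continuous φ) (hψc : Continuous ψ)
    (hφm : Monotone φ) (hψm : Monotone ψ)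
    (hφbdd : ∃ M, ∀ x, |φ x| ≤ M) (hψbdd : ∃ M, ∀ x, |ψ x| ≤ M)
    (umin vopt : ℝ) (humin : ∀ x, umin ≤ φ x)
    (u v : ℕ → ℝ → ℝ)
    (hu0 : ∀ x ∈ Set.Icc (-1 : ℝ) 1, u 0 x = umin)
    (hrecu : ∀ i : ℕ, ∀ x ∈ Set.Icc (-1 : ℝ) 1,
      u (i + 1) x = (1 / (2 * α) ^ d) *
        ∫ ω in Set.Icc (fun _ : Fin d => -α) (fun _ => α), φ (fun j => v i (x + ω j)))
    (hrecv : ∀ i : ℕ, ∀ x : ℝ, |x| ≤ 1 - α →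
      v i x = (1 / (2 * α) ^ dt) *
        ∫ ω in Set.Icc (fun _ : Fin dt => -α) (fun _ => α), ψ (fun j => u i (x - ω j)))
    (hbdry : ∀ i : ℕ, ∀ x : ℝ, 1 - α < |x| → v i x = vopt) :
    ∀ i : ℕ, ∀ x ∈ Set.Icc (-1 : ℝ) 1, u i x ≤ u (i + 1) x ∧ v i x ≤ v (i + 1) x := by
  have h : IsContinuumDE α φ ψ umin vopt u v :=
    { init := hu0
      u_succ := by simpa only [cubeMean, cube, Fintype.card_fin, one_div] using hrecu
      v_interior := by simpa only [cubeMean, cube, Fintype.card_fin, one_div] using hrecv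
      v_boundary := hbdry }
  intro i x hx
  obtain ⟨hu, hv⟩ :=
    h.monotone hα0 hφc.measurable hψc.measurable hφbdd hψbdd hφm hψm humin i
  exact ⟨hu x hx, hv x⟩

/-- Monotonicity of the continuum density evolution: with worst-case
initialization and best boundary condition, u(x,i) ≤ u(x,i+1) and
v(x,i) ≤ v(x,i+1) for all x ∈ [−1,1] and all i. -/
theorem continuum_de_monotone
    (d dt : ℕ) (α : ℝ) (hα0 : 0 < α) (hα1 : α < 1)
    (φ : (Fin d → ℝ) → ℝ) (ψ : (Fin dt → ℝ) → ℝ)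
    (hφc : Continuous φ) (hψc : Continuous ψ)
    (hφm : Monotone φ) (hψm : Monotone ψ)
    (hφbdd : ∃ M, ∀ x, |φ x| ≤ M) (hψbdd : ∃ M, ∀ x, |ψ x| ≤ M)
    (umin vopt : ℝ) (humin : ∀ x, umin ≤ φ x) (hvopt : ∀ x, ψ x ≤ vopt)
    (u v : ℕ → ℝ → ℝ)
    (hu0 : ∀ x ∈ Set.Icc (-1 : ℝ) 1, u 0 x = umin)
    (hrecu : ∀ i : ℕ, ∀ x ∈ Set.Icc (-1 : ℝ) 1,
      u (i + 1) x = (1 / (2 * α) ^ d) *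
        ∫ ω in Set.Icc (fun _ : Fin d => -α) (fun _ => α), φ (fun j => v i (x + ω j)))
    (hrecv : ∀ i : ℕ, ∀ x : ℝ, |x| ≤ 1 - α →
      v i x = (1 / (2 * α) ^ dt) *
        ∫ ω in Set.Icc (fun _ : Fin dt => -α) (fun _ => α), ψ (fun j => u i (x - ω j)))
    (hbdry : ∀ i : ℕ, ∀ x : ℝ, 1 - α < |x| → v i x = vopt) :
    ∀ i : ℕ, ∀ x ∈ Set.Icc (-1 : ℝ) 1, u i x ≤ u (i + 1) x ∧ v i x ≤ v (i + 1) x :=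
  continuum_de_monotone_general d dt α hα0 φ ψ hφc hψc hφm hψm hφbdd hψbdd umin vopt humin u v hu0
    hrecu hrecv hbdry
end

section
/- Sandwich/comparison for DE with improved boundaries: in the discrete DE system, if two trajectories (u_l(i), v_l(i)) and (û_l(i), v̂_l(i)) satisfy u_l(0) ≤ û_l(0) for all l and use boundary values v_opt ≤ v̂_opt respectively, then u_l(i) ≤ û_l(i) and v_l(i) ≤ v̂_l(i) for all l and all i. -/
/-!
Both updates are nonnegative averages of monotone functions, hence monotone in their inputs, and
for an interior `l` the window `l - w` of the `v`-update stays inside `[0, L - 1]`, where the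
`u`'s are compared. Outside the interior the `v`'s are the boundary values, compared by
`vopt ≤ vopth`. Induction on the iteration count then propagates the comparison.
-/

theorem mul_sum_le_mul_sum_of_monotone {ι α : Type*} [Fintype ι] [Preorder α] {f : α → ℝ}
    (hf : Monotone f) {c : ℝ} (hc : 0 ≤ c) {x y : ι → α} (hxy : x ≤ y) :
    c * ∑ w, f (x w) ≤ c * ∑ w, f (y w) := by
  gcongr with w
  exact hf (hxy w)

theorem de_comparison_general
    (L W d dt : ℕ)
    (φ : (Fin d → ℝ) → ℝ) (ψ : (Fin dt → ℝ) → ℝ)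
    (hφ : Monotone φ) (hψ : Monotone ψ)
    (u v uh vh : ℕ → ℤ → ℝ) (vopt vopth : ℝ)
    (hvle : vopt ≤ vopth)
    (hu0 : ∀ l : ℤ, 0 ≤ l → l ≤ (L : ℤ) - 1 → u 0 l ≤ uh 0 l)
    (hrecu : ∀ i : ℕ, ∀ l : ℤ, 0 ≤ l → l ≤ (L : ℤ) - 1 →
      u (i + 1) l = (1 / (W : ℝ) ^ d) *
        ∑ w : Fin d → Fin W, φ (fun j => v i (l + (w j : ℤ))))
    (hrecuh : ∀ i : ℕ, ∀ l : ℤ, 0 ≤ l → l ≤ (L : ℤ) - 1 →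
      uh (i + 1) l = (1 / (W : ℝ) ^ d) *
        ∑ w : Fin d → Fin W, φ (fun j => vh i (l + (w j : ℤ))))
    (hrecv : ∀ i : ℕ, ∀ l : ℤ, (W : ℤ) - 1 ≤ l → l ≤ (L : ℤ) - 1 →
      v i l = (1 / (W : ℝ) ^ dt) *
        ∑ w : Fin dt → Fin W, ψ (fun j => u i (l - (w j : ℤ))))
    (hrecvh : ∀ i : ℕ, ∀ l : ℤ, (W : ℤ) - 1 ≤ l → l ≤ (L : ℤ) - 1 →
      vh i l = (1 / (W : ℝ) ^ dt) *
        ∑ w : Fin dt → Fin W, ψ (fun j => uh i (l - (w j : ℤ))))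
    (hbdry : ∀ i : ℕ, ∀ l : ℤ, ¬((W : ℤ) - 1 ≤ l ∧ l ≤ (L : ℤ) - 1) → v i l = vopt)
    (hbdryh : ∀ i : ℕ, ∀ l : ℤ, ¬((W : ℤ) - 1 ≤ l ∧ l ≤ (L : ℤ) - 1) → vh i l = vopth) :
    ∀ i : ℕ, (∀ l : ℤ, 0 ≤ l → l ≤ (L : ℤ) - 1 → u i l ≤ uh i l) ∧
      (∀ l : ℤ, v i l ≤ vh i l) := by
  have v_le_of_u_le : ∀ i, (∀ l : ℤ, 0 ≤ l → l ≤ (L : ℤ) - 1 → u i l ≤ uh i l) →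
      ∀ l, v i l ≤ vh i l := by
    intro i hu l
    by_cases hl : (W : ℤ) - 1 ≤ l ∧ l ≤ (L : ℤ) - 1
    · rw [hrecv i l hl.1 hl.2, hrecvh i l hl.1 hl.2]
      refine mul_sum_le_mul_sum_of_monotone hψ (by positivity) fun w j => hu _ ?_ ?_ <;>
        omega
    · rw [hbdry i l hl, hbdryh i l hl]
      exact hvle
  intro i
  induction i with
  | zero => exact ⟨hu0, v_le_of_u_le 0 hu0⟩
  | succ i ih =>
    have hu : ∀ l : ℤ, 0 ≤ l → l ≤ (L : ℤ) - 1 → u (i + 1) l ≤ uh (i + 1) l := by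
      intro l h0 h1
      rw [hrecu i l h0 h1, hrecuh i l h0 h1]
      exact mul_sum_le_mul_sum_of_monotone hφ (by positivity) fun w j => ih.2 _
    exact ⟨hu, v_le_of_u_le _ hu⟩

/-- Sandwich/comparison for density evolution with improved boundaries: if two
trajectories satisfy u_l(0) ≤ û_l(0) and use boundary values v_opt ≤ v̂_opt,
then u_l(i) ≤ û_l(i) and v_l(i) ≤ v̂_l(i) for all sections l and all i. -/
theorem de_comparison
    (L W d dt : ℕ) (hW : 1 ≤ W) (hL : W ≤ L)
    (φ : (Fin d → ℝ) → ℝ) (ψ : (Fin dt → ℝ) → ℝ)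
    (hφ : Monotone φ) (hψ : Monotone ψ)
    (u v uh vh : ℕ → ℤ → ℝ) (vopt vopth : ℝ)
    (hvle : vopt ≤ vopth)
    (hu0 : ∀ l : ℤ, 0 ≤ l → l ≤ (L : ℤ) - 1 → u 0 l ≤ uh 0 l)
    (hrecu : ∀ i : ℕ, ∀ l : ℤ, 0 ≤ l → l ≤ (L : ℤ) - 1 →
      u (i + 1) l = (1 / (W : ℝ) ^ d) *
        ∑ w : Fin d → Fin W, φ (fun j => v i (l + (w j : ℤ))))
    (hrecuh : ∀ i : ℕ, ∀ l : ℤ, 0 ≤ l → l ≤ (L : ℤ) - 1 →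
      uh (i + 1) l = (1 / (W : ℝ) ^ d) *
        ∑ w : Fin d → Fin W, φ (fun j => vh i (l + (w j : ℤ))))
    (hrecv : ∀ i : ℕ, ∀ l : ℤ, (W : ℤ) - 1 ≤ l → l ≤ (L : ℤ) - 1 →
      v i l = (1 / (W : ℝ) ^ dt) *
        ∑ w : Fin dt → Fin W, ψ (fun j => u i (l - (w j : ℤ))))
    (hrecvh : ∀ i : ℕ, ∀ l : ℤ, (W : ℤ) - 1 ≤ l → l ≤ (L : ℤ) - 1 →
      vh i l = (1 / (W : ℝ) ^ dt) *
        ∑ w : Fin dt → Fin W, ψ (fun j => uh i (l - (w j : ℤ))))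
    (hbdry : ∀ i : ℕ, ∀ l : ℤ, ¬((W : ℤ) - 1 ≤ l ∧ l ≤ (L : ℤ) - 1) → v i l = vopt)
    (hbdryh : ∀ i : ℕ, ∀ l : ℤ, ¬((W : ℤ) - 1 ≤ l ∧ l ≤ (L : ℤ) - 1) → vh i l = vopth) :
    ∀ i : ℕ, (∀ l : ℤ, 0 ≤ l → l ≤ (L : ℤ) - 1 → u i l ≤ uh i l) ∧
      (∀ l : ℤ, v i l ≤ vh i l) :=
  de_comparison_general L W d dt φ ψ hφ hψ u v uh vh vopt vopth hvle hu0 hrecu hrecuh hrecv hrecvh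
    hbdry hbdryh
end
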